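/- arXiv:2311.04641 — 5 statements merged into one kernel-verified Lean document; each statement's English description precedes it below -/
import Mathlib

section
/- For all real n ≥ 7, 2(n - 3 + 1/(n-1)) · (2√2(n - 38/15) + n² - 5n + 8)/((n-1)(n-2)²(n-4)) · (√2(n - 38/15) - 1.5) > 2√2 + 0.4√2/n. -/
theorem stmt_13 (n : ℝ) (hn : 7 ≤ n) :
    2*(n - 3 + 1/(n-1)) * ((2*Real.sqrt 2*(n - 38/15) + n^2 - 5*n + 8)/((n-1)*(n-2)^2*(n-4)))
      * (Real.sqrt 2*(n - 38/15) - 1.5)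
    > 2*Real.sqrt 2 + 0.4*Real.sqrt 2/n := by
  set s := Real.sqrt 2 with hs
  have hs2 : s^2 = 2 := Real.sq_sqrt (by norm_num)
  have hsu : s < 1.4143 := by
    rw [hs, show (1.4143:ℝ) = Real.sqrt (1.4143^2) by rw [Real.sqrt_sq]; norm_num]
    exact Real.sqrt_lt_sqrt (by positivity) (by norm_num)
  have h1 : (0:ℝ) < n - 1 := by linarith
  have h2 : (0:ℝ) < n - 2 := by linarith
  have h4 : (0:ℝ) < n - 4 := by linarith
  have hn0 : (0:ℝ) < n := by linarith
  have h7 : (0:ℝ) ≤ n - 7 := by linarith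
  have hp2 : (0:ℝ) ≤ (n-7)^2 := by positivity
  have hp3 : (0:ℝ) ≤ (n-7)^3 := by positivity
  have hp4 : (0:ℝ) ≤ (n-7)^4 := by positivity
  have hp5 : (0:ℝ) ≤ (n-7)^5 := by positivity
  have hA1 : (0:ℝ) < 780*n^5 - 7560*n^4 + 25590*n^3 - 36960*n^2 + 20280*n - 1440 := by
    nlinarith [h7, hp2, hp3, hp4, hp5]
  have hB : (0:ℝ) < 10000*(1125*n^5 - 10245*n^4 + 33632*n^3 - 47588*n^2 + 24608*n)
      + 14143*(-780*n^5 + 7560*n^4 - 25590*n^3 + 36960*n^2 - 20280*n + 1440) := by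
    nlinarith [h7, hp2, hp3, hp4, hp5]
  have hkey : (0:ℝ) ≤ (1.4143 - s) * (780*n^5 - 7560*n^4 + 25590*n^3 - 36960*n^2 + 20280*n - 1440) :=
    mul_nonneg (by linarith) (le_of_lt hA1)
  have e1 : s^2*n = 2*n := by rw [hs2]
  have e2 : s^2*n^2 = 2*n^2 := by rw [hs2]
  have e3 : s^2*n^3 = 2*n^3 := by rw [hs2]
  have e4 : s^2*n^4 = 2*n^4 := by rw [hs2]
  have e5 : s^2*n^5 = 2*n^5 := by rw [hs2]
  rw [gt_iff_lt]
  field_simp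
  nlinarith [hB, hkey, e1, e2, e3, e4, e5, hs2]
end

section
/- For all real n ≥ 7, (2√((n-2)(2n-6)) - n + 4)/(n-2) · ((2-√2)/2 + √2/n) < (2√2 - 1)·(2-√2)/2 + 2.76/n + 1.7/n². -/
/-!
Since `(n-2)(2n-6) = 2(n-5/2)² - 1/2`, the square root is at most `√2 (n-5/2)`. With this bound
the left side becomes `(2√2-1)(2-√2)/2 + (7-3√2)/n + (4-2√2)/(n(n-2))`, and the remaining gap
to the right side is `(3√2-4.24)/n + ((2√2-2.3)n - 3.4)/(n²(n-2))`, positive for `n ≥ 7`.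
-/

open Real

lemma sqrt_sub_two_mul_two_mul_sub_six_le {n : ℝ} (hn : 5/2 ≤ n) :
    √((n-2)*(2*n-6)) ≤ √2 * (n - 5/2) := by
  rw [← sqrt_sq (by linarith : 0 ≤ n - 5/2), ← sqrt_mul zero_le_two]
  exact sqrt_le_sqrt (by nlinarith)

lemma two_mul_sqrt_two_mul_sub_div_mul_eq {n : ℝ} (hn : n ≠ 0) (hn2 : n - 2 ≠ 0) :
    (2*(√2*(n - 5/2)) - n + 4)/(n-2) * ((2 - √2)/2 + √2/n)
      = (2*√2 - 1)*(2 - √2)/2 + (7 - 3*√2)/n + (4 - 2*√2)/(n*(n-2)) := by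
  have hs : √2 ^ 2 = 2 := sq_sqrt zero_le_two
  field_simp
  linear_combination (5*n - 10) * hs

lemma seven_sub_three_sqrt_two_div_add_lt {n : ℝ} (hn : 7 ≤ n) :
    (7 - 3*√2)/n + (4 - 2*√2)/(n*(n-2)) < 2.76/n + 1.7/n^2 := by
  have hs : 1.414 < √2 := lt_sqrt_of_sq_lt (by norm_num)
  have hn2 : n - 2 ≠ 0 := by linarith
  have hn0 : n ≠ 0 := by linarith
  have hgap : 2.76/n + 1.7/n^2 - ((7 - 3*√2)/n + (4 - 2*√2)/(n*(n-2)))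
      = (3*√2 - 4.24)/n + ((2*√2 - 2.3)*n - 3.4)/(n^2*(n-2)) := by
    field_simp
    ring
  have hgap₁ : 0 < (3*√2 - 4.24)/n := div_pos (by linarith) (by linarith)
  have hgap₂ : 0 < ((2*√2 - 2.3)*n - 3.4)/(n^2*(n-2)) :=
    div_pos (by nlinarith) (mul_pos (by positivity) (by linarith))
  linarith

theorem stmt_14 (n : ℝ) (hn : 7 ≤ n) :
    (2*Real.sqrt ((n-2)*(2*n-6)) - n + 4)/(n-2) * ((2 - Real.sqrt 2)/2 + Real.sqrt 2/n)
    < (2*Real.sqrt 2 - 1)*(2 - Real.sqrt 2)/2 + 2.76/n + 1.7/n^2 := by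
  have hs : √2 < 2 := by rw [sqrt_lt' two_pos]; norm_num
  calc (2*√((n-2)*(2*n-6)) - n + 4)/(n-2) * ((2 - √2)/2 + √2/n)
      ≤ (2*(√2*(n - 5/2)) - n + 4)/(n-2) * ((2 - √2)/2 + √2/n) := by
        have hsqrt := sqrt_sub_two_mul_two_mul_sub_six_le (by linarith : 5/2 ≤ n)
        gcongr
        · have : 0 < √2/n := by positivity
          linarith
    _ = (2*√2 - 1)*(2 - √2)/2 + (7 - 3*√2)/n + (4 - 2*√2)/(n*(n-2)) :=
        two_mul_sqrt_two_mul_sub_div_mul_eq (by linarith) (by linarith)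
    _ < (2*√2 - 1)*(2 - √2)/2 + 2.76/n + 1.7/n^2 := by
        have hrest := seven_sub_three_sqrt_two_div_add_lt hn
        linarith
end

section
/- For all real n ≥ 7, (1/(n-2)) · (((2-√2)/2)·n - 5/2 - 1/(6(n-2)) + √2)/(n - 5/2 - √2) · (2√((n-2)(2n-6)) - n + 4)/(n-2) · ((2-√2)/2 + √2/n) > ((8√2 - 11)/2)·(1/n + 7/n²). -/
/-!
Write the left-hand side as `F₁ F₂ F₃ F₄`. Each factor is at least its limiting constant
times `1 + aᵢ/n`: `F₁ ≥ (1 + 2/n)/n`, `F₂ ≥ (2 - √2)/2`, `F₃ ≥ (2√2 - 1)(1 + (3 - 2√2)/n)`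
and `F₄ = (2 - √2)/2 · (1 + (2 + 2√2)/n)`. The constants multiply to exactly `(8√2 - 11)/2`,
the right-hand constant, so the inequality is decided at order `1/n²`: the corrections `aᵢ`
sum to `7`, and `∏ (1 + aᵢ/n) > 1 + 7/n`.
-/

open Real

lemma sqrt_two_bounds : 7/5 < √2 ∧ √2 < 17/12 := by
  have h := sq_sqrt (zero_le_two (α := ℝ))
  have h0 := sqrt_nonneg 2
  constructor <;> nlinarith

lemma one_add_sum_div_lt_prod_one_add_div {a b c n : ℝ} (ha : 0 < a) (hb : 0 < b) (hc : 0 ≤ c)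
    (hn : 0 < n) : 1 + (a + b + c) / n < (1 + a / n) * (1 + b / n) * (1 + c / n) := by
  have : 0 < a * b / n ^ 2 := by positivity
  have : 0 ≤ (a * c + b * c) / n ^ 2 + a * b * c / n ^ 3 := by positivity
  calc 1 + (a + b + c) / n
      < 1 + (a + b + c) / n + a * b / n ^ 2 + ((a * c + b * c) / n ^ 2 + a * b * c / n ^ 3) := by
        linarith
    _ = (1 + a / n) * (1 + b / n) * (1 + c / n) := by field_simp; ring

section

variable {n : ℝ}

lemma one_div_mul_one_add_le_one_div_sub (hn : 2 < n) : 1 / n * (1 + 2 / n) ≤ 1 / (n - 2) := by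
  have : 0 < n - 2 := by linarith
  have hn0 : 0 < n := by linarith
  rw [show 1 / n * (1 + 2 / n) = (n + 2) / n ^ 2 by field_simp,
    div_le_div_iff₀ (by positivity) this]
  nlinarith

lemma half_two_sub_sqrt_two_le_div (hn : 5 ≤ n) :
    (2 - √2)/2 ≤ (((2 - √2)/2)*n - 5/2 - 1/(6*(n-2)) + √2)/(n - 5/2 - √2) := by
  obtain ⟨hs1, hs2⟩ := sqrt_two_bounds
  rw [le_div_iff₀ (by linarith)]
  have : 1/(6*(n-2)) ≤ 1/18 := by
    rw [div_le_div_iff₀ (by linarith) (by norm_num)]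
    linarith
  nlinarith

/-- `(n-2)(2n-6) = 2((n - 5/2)² - 1/4)`, and `√(x² - ε) ≥ x - ε/x` for `ε ≤ x²`. -/
lemma sqrt_two_mul_le_sqrt (hn : 4 ≤ n) : √2 * (n - 5/2 - 1/(2*n)) ≤ √((n-2)*(2*n-6)) := by
  apply le_sqrt_of_sq_le
  have hn0 : 0 < n := by linarith
  rw [mul_pow, sq_sqrt zero_le_two]
  field_simp
  nlinarith

lemma two_sqrt_two_sub_one_mul_le_div (hn : 4 ≤ n) :
    (2*√2 - 1)*(1 + (3 - 2*√2)/n) ≤ (2*√((n-2)*(2*n-6)) - n + 4)/(n-2) := by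
  obtain ⟨hs1, hs2⟩ := sqrt_two_bounds
  have hs := sq_sqrt (zero_le_two (α := ℝ))
  have hn0 : 0 < n := by linarith
  have hsqrt := sqrt_two_mul_le_sqrt hn
  have hslack : 0 ≤ ((13 - 9*√2)*n - (22 - 15*√2))/n := div_nonneg (by nlinarith) hn0.le
  rw [le_div_iff₀ (by linarith)]
  calc (2*√2 - 1)*(1 + (3 - 2*√2)/n) * (n - 2)
      = 2*√2*(n - 5/2 - 1/(2*n)) - n + 4 - ((13 - 9*√2)*n - (22 - 15*√2))/n := by
        field_simp
        linear_combination (8 - 4*n) * hs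
    _ ≤ 2*√((n-2)*(2*n-6)) - n + 4 := by linarith

lemma half_two_sub_sqrt_two_add_sqrt_two_div (hn : n ≠ 0) :
    (2 - √2)/2 + √2/n = (2 - √2)/2 * (1 + (2 + 2*√2)/n) := by
  have hs := sq_sqrt (zero_le_two (α := ℝ))
  field_simp
  linear_combination 2 * hs

end

theorem stmt_15 (n : ℝ) (hn : 7 ≤ n) :
    (1/(n-2)) * ((((2 - Real.sqrt 2)/2)*n - 5/2 - 1/(6*(n-2)) + Real.sqrt 2)/(n - 5/2 - Real.sqrt 2))
      * ((2*Real.sqrt ((n-2)*(2*n-6)) - n + 4)/(n-2))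
      * ((2 - Real.sqrt 2)/2 + Real.sqrt 2/n)
    > ((8*Real.sqrt 2 - 11)/2) * (1/n + 7/n^2) := by
  obtain ⟨hs1, hs2⟩ := sqrt_two_bounds
  have hn0 : 0 < n := by linarith
  have hconst : ((2 - √2)/2)^2 * (2*√2 - 1) = (8*√2 - 11)/2 := by
    linear_combination (2*√2 - 9)/4 * sq_sqrt (zero_le_two (α := ℝ))
  rw [half_two_sub_sqrt_two_add_sqrt_two_div hn0.ne']
  calc ((8*√2 - 11)/2) * (1/n + 7/n^2)
      = ((2 - √2)/2)^2 * (2*√2 - 1) * (1/n) * (1 + (2 + (2 + 2*√2) + (3 - 2*√2))/n) := by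
        rw [hconst]; field_simp; ring
    _ < ((2 - √2)/2)^2 * (2*√2 - 1) * (1/n) *
          ((1 + 2/n) * (1 + (2 + 2*√2)/n) * (1 + (3 - 2*√2)/n)) := by
        have : 0 < ((2 - √2)/2)^2 * (2*√2 - 1) := by rw [hconst]; linarith
        gcongr
        exact one_add_sum_div_lt_prod_one_add_div two_pos (by positivity) (by linarith) hn0
    _ = 1/n * (1 + 2/n) * ((2 - √2)/2) * ((2*√2 - 1)*(1 + (3 - 2*√2)/n))
          * ((2 - √2)/2 * (1 + (2 + 2*√2)/n)) := by ring
    _ ≤ _ := by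
        have h1 := one_div_mul_one_add_le_one_div_sub (n := n) (by linarith)
        have h2 := half_two_sub_sqrt_two_le_div (n := n) (by linarith)
        have h3 := two_sqrt_two_sub_one_mul_le_div (n := n) (by linarith)
        have hF1 : 0 ≤ 1/(n-2) := (by positivity : (0:ℝ) ≤ 1/n*(1+2/n)).trans h1
        have hc : 0 ≤ (2 - √2)/2 := by linarith
        have hF12 := mul_nonneg hF1 (hc.trans h2)
        have he : 0 ≤ (3 - 2*√2)/n := div_nonneg (by linarith) hn0.le
        have hL3 : 0 ≤ (2*√2 - 1)*(1 + (3 - 2*√2)/n) := mul_nonneg (by linarith) (by linarith)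
        gcongr ?_ * ?_ * ?_ * _
end

section
/- For all real n ≥ 9 and all real q with 1 < q ≤ 1 + 2/n, (n - 4 + 4/n)/(n - 4 + q) < 1 - q/n + (1.5q² - 8q + 12)/n². -/
theorem stmt_16 (n q : ℝ) (hn : 9 ≤ n) (hq1 : 1 < q) (hq2 : q ≤ 1 + 2/n) :
    (n - 4 + 4/n)/(n - 4 + q) < 1 - q/n + (1.5*q^2 - 8*q + 12)/n^2 := by
  have hn0 : (0:ℝ) < n := by linarith
  have hd : 0 < n - 4 + q := by linarith
  have hc : (2/n) * n = 2 := div_mul_cancel₀ 2 (ne_of_gt hn0)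
  have hq2' : q * n ≤ n + 2 := by nlinarith [mul_le_mul_of_nonneg_right hq2 hn0.le]
  rw [div_lt_iff₀ hd]
  have h4 : (4/n) * n = 4 := div_mul_cancel₀ 4 (ne_of_gt hn0)
  have key : (n - 4 + 4/n) * n^2 < (1 - q/n + (1.5*q^2 - 8*q + 12)/n^2) * (n - 4 + q) * n^2 := by
    have e1 : (n - 4 + 4/n) * n^2 = n^3 - 4*n^2 + 4*n := by field_simp
    have e2 : (1 - q/n + (1.5*q^2 - 8*q + 12)/n^2) * (n - 4 + q) * n^2
        = (n^2 - q*n + (1.5*q^2 - 8*q + 12)) * (n - 4 + q) := by field_simp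
    rw [e1, e2]
    nlinarith [sq_nonneg (q-1), sq_nonneg (q*n - n - 2), mul_pos hn0 hn0,
      mul_le_mul_of_nonneg_left hq2' (le_of_lt hd), sq_nonneg n,
      mul_pos (mul_pos hn0 hn0) hn0, mul_lt_mul_of_pos_right hq1 hn0]
  have hn2 : (0:ℝ) < n^2 := by positivity
  nlinarith [key, hn2]
end

section
/- For all real n ≥ 7, let M₁ = (p+1)·[(n-1)²q/(4n) - 1]⁻¹·[n/q - n(n-1)/(n+2)]^{q/2} with p = (n+2)/(n-2) and q = 2p/(p+1) = (n+2)/n. Then M₁ > 1.7·[((n-1)²(n+2))/(4n²) - 1]⁻¹. -/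
theorem stmt_19 (n : ℝ) (hn : 7 ≤ n) (p q M₁ : ℝ)
    (hp : p = (n+2)/(n-2)) (hq : q = 2*p/(p+1))
    (hM₁ : M₁ = (p+1) * ((n-1)^2*q/(4*n) - 1)⁻¹
        * (n/q - n*(n-1)/(n+2)) ^ (q/2)) :
    q = (n+2)/n ∧
    (n-1)^2*q/(4*n) - 1 > 0 ∧
    n/q - n*(n-1)/(n+2) > 0 ∧
    M₁ > 1.7 * ((n-1)^2*(n+2)/(4*n^2) - 1)⁻¹ := by
  have hn0 : (0:ℝ) < n := by linarith
  have hn2 : (0:ℝ) < n - 2 := by linarith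
  have hn2' : (0:ℝ) < n + 2 := by linarith
  have hp1 : p + 1 = 2*n/(n-2) := by
    rw [hp, div_add' _ _ _ (ne_of_gt hn2)]; ring_nf
  have hq' : q = (n+2)/n := by
    rw [hq, hp1, hp]
    rw [div_eq_div_iff (by positivity) hn0.ne']
    field_simp
  have hA : (n-1)^2*q/(4*n) - 1 = (n-1)^2*(n+2)/(4*n^2) - 1 := by
    rw [hq']; field_simp
  have hApos : (n-1)^2*(n+2)/(4*n^2) - 1 > 0 := by
    rw [gt_iff_lt, sub_pos, lt_div_iff₀ (by positivity)]
    nlinarith [sq_nonneg (n-7)]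
  have hB : n/q - n*(n-1)/(n+2) = n/(n+2) := by
    rw [hq']; field_simp; ring
  have hBpos : (0:ℝ) < n/(n+2) := by positivity
  have hB1 : n/(n+2) ≤ 1 := by
    rw [div_le_one hn2']; linarith
  have hq2 : q/2 ≤ 1 := by
    rw [hq', div_le_one (by norm_num), div_le_iff₀ hn0]; linarith
  have hpow : n/(n+2) ≤ (n/(n+2)) ^ (q/2) := by
    have := Real.rpow_le_rpow_of_exponent_ge hBpos hB1 hq2
    simpa using this
  refine ⟨hq', by rw [hA]; exact hApos, by rw [hB]; exact hBpos, ?_⟩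
  rw [hM₁, hA, hB]
  have hAinv : (0:ℝ) < ((n-1)^2*(n+2)/(4*n^2) - 1)⁻¹ := by positivity
  have hp1pos : 0 < p + 1 := by rw [hp1]; positivity
  have key : (1.7:ℝ) < (p+1) * ((n/(n+2)) ^ (q/2)) := by
    calc (1.7:ℝ) < (p+1) * (n/(n+2)) := by
          rw [hp1, div_mul_div_comm, lt_div_iff₀ (by positivity)]
          nlinarith
      _ ≤ (p+1) * ((n/(n+2)) ^ (q/2)) := by
          exact mul_le_mul_of_nonneg_left hpow (le_of_lt hp1pos)
  calc 1.7 * ((n-1)^2*(n+2)/(4*n^2) - 1)⁻¹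
      < ((p+1) * ((n/(n+2)) ^ (q/2))) * ((n-1)^2*(n+2)/(4*n^2) - 1)⁻¹ := by
        exact mul_lt_mul_of_pos_right key hAinv
    _ = (p+1) * ((n-1)^2*(n+2)/(4*n^2) - 1)⁻¹ * (n/(n+2)) ^ (q/2) := by ring
end
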